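/- arXiv:2010.01167 — 2 statements merged into one kernel-verified Lean document; each statement's English description precedes it below -/
import Mathlib

section
/- The inner product ⟨ok̄ ⊗ (−½), φ⟩ equals 0; i.e., in the FR state the outcome ok̄ for the first lab is exclusive of the outcome z = −½ for the second lab. -/
noncomputable section
open scoped InnerProductSpace
abbrev Q : Type := EuclideanSpace ℂ (Fin 2)
abbrev QQ : Type := EuclideanSpace ℂ (Fin 2 × Fin 2)
/-- standard basis of ℂ² -/
def e (i : Fin 2) : Q := EuclideanSpace.single i 1
/-- tensor product of two qubit vectors -/
def tp (a b : Q) : QQ := WithLp.toLp 2 (fun p : Fin 2 × Fin 2 => a p.1 * b p.2)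
/-- |h̄⟩ = e 0, |t̄⟩ = e 1, |−½⟩ = e 0, |½⟩ = e 1 -/
def phi : QQ := (Real.sqrt (1/3) : ℂ) • (tp (e 0) (e 0) + tp (e 1) (e 0) + tp (e 1) (e 1))
def okb : Q := (Real.sqrt 2 : ℂ)⁻¹ • (e 0 - e 1)
def failb : Q := (Real.sqrt 2 : ℂ)⁻¹ • (e 0 + e 1)
def okv : Q := (Real.sqrt 2 : ℂ)⁻¹ • (e 0 - e 1)
def failv : Q := (Real.sqrt 2 : ℂ)⁻¹ • (e 0 + e 1)


theorem inner_tp_tp (a b c d : Q) : ⟪tp a b, tp c d⟫_ℂ = ⟪a, c⟫_ℂ * ⟪b, d⟫_ℂ := by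
  simp only [tp, PiLp.inner_apply, Fintype.sum_prod_type, Finset.sum_mul_sum]
  refine Finset.sum_congr rfl fun i _ => Finset.sum_congr rfl fun j _ => ?_
  simp only [RCLike.inner_apply, map_mul]
  ring

theorem tp_add_left (a a' b : Q) : tp (a + a') b = tp a b + tp a' b := by
  ext p
  simp [tp, add_mul]

theorem inner_e_e_of_ne {i j : Fin 2} (h : i ≠ j) : ⟪e i, e j⟫_ℂ = 0 := by
  simp [e, EuclideanSpace.inner_single_left, h.symm]

/-- The `z = −½` part of `φ` is `√(1/3) (|h̄⟩ + |t̄⟩) ⊗ |−½⟩`, and `ok̄ ⊥ h̄ + t̄`. -/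
theorem phi_eq : phi = (Real.sqrt (1/3) : ℂ) • (tp (e 0 + e 1) (e 0) + tp (e 1) (e 1)) := by
  rw [phi, tp_add_left]

theorem inner_okb_e_add_e : ⟪okb, e 0 + e 1⟫_ℂ = 0 := by
  simp [okb, e, EuclideanSpace.inner_single_left]

theorem okbar_exclusive_of_z_neg_half : ⟪tp okb (e 0), phi⟫_ℂ = 0 := by
  rw [phi_eq, inner_smul_right, inner_add_right, inner_tp_tp, inner_tp_tp, inner_okb_e_add_e,
    inner_e_e_of_ne (by decide : (0 : Fin 2) ≠ 1)]
  simp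
end
end

section
/- The probability that W obtains outcome 'ok' in the FR state is 1/6: the squared norm of ((I ⊗ ⟨ok|) applied to φ) equals 1/6; equivalently |⟨h̄ ⊗ ok, φ⟩|² + |⟨t̄ ⊗ ok, φ⟩|² = 1/6. -/
noncomputable section
open scoped InnerProductSpace
theorem inner_e_e (i j : Fin 2) : ⟪e i, e j⟫_ℂ = if i = j then 1 else 0 := by
  simp [e, EuclideanSpace.inner_single_left]

theorem inner_okv_e_zero : ⟪okv, e 0⟫_ℂ = (Real.sqrt 2 : ℂ)⁻¹ := by
  simp [okv, e, EuclideanSpace.inner_single_left]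

theorem inner_okv_e_one : ⟪okv, e 1⟫_ℂ = -(Real.sqrt 2 : ℂ)⁻¹ := by
  simp [okv, e, EuclideanSpace.inner_single_left]

/-- The `|t̄⟩ ⊗ |−½⟩` and `|t̄⟩ ⊗ |½⟩` components of `phi` cancel against `⟨ok|`. -/
theorem inner_tp_okv_phi (a : Q) :
    ⟪tp a okv, phi⟫_ℂ = (Real.sqrt (1/3) : ℂ) * (Real.sqrt 2 : ℂ)⁻¹ * ⟪a, e 0⟫_ℂ := by
  rw [phi, inner_smul_right, inner_add_right, inner_add_right, inner_tp_tp, inner_tp_tp,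
    inner_tp_tp, inner_okv_e_zero, inner_okv_e_one]
  ring

theorem prob_w_ok :
    ‖⟪tp (e 0) okv, phi⟫_ℂ‖ ^ 2 + ‖⟪tp (e 1) okv, phi⟫_ℂ‖ ^ 2 = 1 / 6 := by
  have h_heads : ⟪tp (e 0) okv, phi⟫_ℂ = (Real.sqrt (1/3) : ℂ) * (Real.sqrt 2 : ℂ)⁻¹ := by
    rw [inner_tp_okv_phi, inner_e_e, if_pos rfl, mul_one]
  have h_tails : ⟪tp (e 1) okv, phi⟫_ℂ = 0 := by
    rw [inner_tp_okv_phi, inner_e_e, if_neg (by decide), mul_zero]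
  rw [h_heads, h_tails, norm_zero, norm_mul, norm_inv, Complex.norm_real, Complex.norm_real,
    Real.norm_of_nonneg (Real.sqrt_nonneg _), Real.norm_of_nonneg (Real.sqrt_nonneg _),
    mul_pow, inv_pow, Real.sq_sqrt (by norm_num), Real.sq_sqrt (by norm_num)]
  norm_num
end
end
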